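/- Let γ ∈ (1,2). Then the series ∑_{j=0}^∞ w_j^{(γ)} converges to 0, and every partial sum from index 2 onward is strictly negative: ∑_{j=0}^n w_j^{(γ)} < 0 for all n ≥ 2. -/

import Mathlib

/-!
Put `α = γ - 1 ∈ (0, 1)`. The absorption identity `(k + 1) g_{k+1}^{(γ)} = -γ g_k^{(α)}` makes the
partial sums of the coefficients collapse to `∑_{k ≤ n} g_k^{(γ)} = g_n^{(α)}`, so the partial sums
of the weights are the convex combinations `(γ/2) g_{n+1}^{(α)} + ((2-γ)/2) g_n^{(α)}`. For
`α ∈ (0, 1)` and `n ≥ 1`, `g_n^{(α)}` is negative with `|g_n^{(α)}| ≤ α / n`, which gives both the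
sign and the limit `0` of the partial sums. Since `w_j^{(γ)} ≥ 0` for `j ≥ 3`, convergence of the
partial sums upgrades to `HasSum`.
-/
open scoped Real Topology

/-- Alternating fractional binomial coefficients
`g_k^{(γ)} = (-1)^k (γ choose k) = ((-1)^k / k!) · γ(γ-1)⋯(γ-k+1)`. -/
noncomputable def gcoef (γ : ℝ) (k : ℕ) : ℝ :=
  (-1 : ℝ) ^ k / (Nat.factorial k) * ∏ i ∈ Finset.range k, (γ - i)

/-- WSGD weights. -/
noncomputable def w (γ : ℝ) : ℕ → ℝ
  | 0 => γ / 2 * gcoef γ 0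
  | (k + 1) => γ / 2 * gcoef γ (k + 1) + (2 - γ) / 2 * gcoef γ k

open Filter Finset

lemma hasSum_of_tendsto_sum_range_of_nonneg_add {f : ℕ → ℝ} {a : ℝ} (N : ℕ)
    (hf : ∀ k, 0 ≤ f (k + N))
    (h : Tendsto (fun n => ∑ i ∈ range n, f i) atTop (𝓝 a)) : HasSum f a := by
  rw [← hasSum_nat_add_iff' N, hasSum_iff_tendsto_nat_of_nonneg hf]
  have hshift : ∀ n, ∑ i ∈ range n, f (i + N) = ∑ i ∈ range (n + N), f i - ∑ i ∈ range N, f i :=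
    fun n => by
      rw [add_comm n N, sum_range_add, add_sub_cancel_left]
      exact sum_congr rfl fun i _ => by rw [add_comm]
  simp only [hshift]
  exact (h.comp (tendsto_add_atTop_nat N)).sub_const _

section gcoef

variable (γ : ℝ)

@[simp]
lemma gcoef_zero : gcoef γ 0 = 1 := by
  simp [gcoef]

lemma gcoef_succ (k : ℕ) : gcoef γ (k + 1) = gcoef γ k * (k - γ) / (k + 1) := by
  have hk : (k : ℝ) + 1 ≠ 0 := by positivity
  simp only [gcoef, prod_range_succ, pow_succ, Nat.factorial_succ]
  push_cast
  field_simp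
  ring

lemma succ_mul_gcoef_succ (k : ℕ) :
    ((k : ℝ) + 1) * gcoef γ (k + 1) = -γ * gcoef (γ - 1) k := by
  simp only [gcoef, prod_range_succ', pow_succ, Nat.factorial_succ]
  push_cast
  field_simp
  have hprod : ∏ i ∈ range k, (γ - (i + 1)) = ∏ i ∈ range k, (γ - 1 - i) :=
    prod_congr rfl fun i _ => by ring
  rw [hprod]
  ring

lemma sum_range_succ_gcoef (n : ℕ) : ∑ k ∈ range (n + 1), gcoef γ k = gcoef (γ - 1) n := by
  induction n with
  | zero => simp
  | succ n ih =>
    have hn : (n : ℝ) + 1 ≠ 0 := by positivity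
    have habs := succ_mul_gcoef_succ γ n
    rw [sum_range_succ, ih, gcoef_succ (γ - 1) n]
    field_simp
    linear_combination habs

end gcoef

section unitInterval

variable {α : ℝ} (hα0 : 0 < α) (hα1 : α < 1)
include hα0 hα1

lemma gcoef_succ_neg (n : ℕ) : gcoef α (n + 1) < 0 := by
  induction n with
  | zero => simpa [gcoef_succ] using hα0
  | succ n ih =>
    rw [gcoef_succ]
    have : 0 < (n + 1 : ℕ) - α := by push_cast; linarith
    exact div_neg_of_neg_of_pos (mul_neg_of_neg_of_pos ih (by exact_mod_cast this)) (by positivity)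

lemma neg_gcoef_succ_le (n : ℕ) : -gcoef α (n + 1) ≤ α / (n + 1) := by
  induction n with
  | zero => simp [gcoef_succ]
  | succ n ih =>
    have hneg := gcoef_succ_neg hα0 hα1 n
    have hrec :
        -gcoef α (n + 1 + 1) * ((n + 1 : ℕ) + 1) = -gcoef α (n + 1) * ((n + 1 : ℕ) - α) := by
      rw [gcoef_succ]
      field_simp
    rw [le_div_iff₀ (by positivity)] at ih ⊢
    push_cast at hrec ⊢
    nlinarith

lemma tendsto_gcoef_atTop : Tendsto (gcoef α) atTop (𝓝 0) := by
  rw [← tendsto_add_atTop_iff_nat 1]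
  have hbound := tendsto_one_div_add_atTop_nhds_zero_nat.const_mul α
  rw [mul_zero] at hbound
  refine squeeze_zero_norm (fun n => ?_) hbound
  rw [Real.norm_of_nonpos (gcoef_succ_neg hα0 hα1 n).le, mul_one_div]
  exact neg_gcoef_succ_le hα0 hα1 n

end unitInterval

section weights

variable (γ : ℝ)

lemma sum_range_succ_succ_w (n : ℕ) :
    ∑ j ∈ range (n + 2), w γ j = γ / 2 * gcoef (γ - 1) (n + 1) + (2 - γ) / 2 * gcoef (γ - 1) n := by
  rw [← sum_range_succ_gcoef, ← sum_range_succ_gcoef, sum_range_succ', sum_range_succ' _ (n + 1)]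
  simp only [w, sum_add_distrib, ← mul_sum]
  ring

variable {γ} (hγ1 : 1 < γ) (hγ2 : γ < 2)
include hγ1 hγ2

lemma gcoef_add_two_pos (m : ℕ) : 0 < gcoef γ (m + 2) := by
  have habs := succ_mul_gcoef_succ γ (m + 1)
  have hneg := gcoef_succ_neg (α := γ - 1) (by linarith) (by linarith) m
  push_cast at habs
  nlinarith

lemma w_add_three_nonneg (k : ℕ) : 0 ≤ w γ (k + 3) := by
  have h1 := gcoef_add_two_pos hγ1 hγ2 (k + 1)
  have h0 := gcoef_add_two_pos hγ1 hγ2 k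
  show 0 ≤ γ / 2 * gcoef γ (k + 1 + 2) + (2 - γ) / 2 * gcoef γ (k + 2)
  positivity

lemma tendsto_sum_range_w : Tendsto (fun n => ∑ j ∈ range n, w γ j) atTop (𝓝 0) := by
  rw [← tendsto_add_atTop_iff_nat 2]
  have hG := tendsto_gcoef_atTop (α := γ - 1) (by linarith) (by linarith)
  simpa only [sum_range_succ_succ_w, Function.comp_apply, mul_zero, add_zero] using
    ((hG.comp (tendsto_add_atTop_nat 1)).const_mul (γ / 2)).add (hG.const_mul ((2 - γ) / 2))

end weights

/-- The series `∑_{j=0}^∞ w_j^{(γ)}` converges to `0`, and the partial sums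
`∑_{j=0}^n w_j^{(γ)}` are strictly negative for every `n ≥ 2`. -/
theorem wsgd_weights_sum (γ : ℝ) (hγ1 : 1 < γ) (hγ2 : γ < 2) :
    HasSum (fun j : ℕ => w γ j) 0 ∧
    ∀ n : ℕ, 2 ≤ n → ∑ j ∈ Finset.range (n + 1), w γ j < 0 := by
  refine ⟨hasSum_of_tendsto_sum_range_of_nonneg_add 3 (w_add_three_nonneg hγ1 hγ2)
    (tendsto_sum_range_w hγ1 hγ2), fun n hn => ?_⟩
  obtain ⟨m, rfl⟩ := Nat.exists_eq_add_of_le' hn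
  have h1 := gcoef_succ_neg (α := γ - 1) (by linarith) (by linarith) (m + 1)
  have h0 := gcoef_succ_neg (α := γ - 1) (by linarith) (by linarith) m
  rw [sum_range_succ_succ_w]
  nlinarith
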